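/- Every 3-degenerate finite simple graph G with maximum degree Δ(G) ≥ 5 admits a vi-simultaneous (Δ(G)+5, 3)-coloring; consequently χ_{vi,3}(G) ≤ Δ(G) + 5. -/

import Mathlib

open SimpleGraph

variable {V : Type*}

/-- An *incidence* of `G`: a pair `(v, e)` where `e` is an edge of `G` and `v ∈ e`. -/
abbrev Inc (G : SimpleGraph V) : Type _ :=
  {p : V × Sym2 V // p.2 ∈ G.edgeSet ∧ p.1 ∈ p.2}

/-- The elements to be colored in a vi-simultaneous coloring: vertices together with
incidences. -/
abbrev VIElem (G : SimpleGraph V) : Type _ := V ⊕ Inc G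

/-- Adjacency between elements of `V(G) ∪ I(G)`: two vertices are adjacent when they are
adjacent in `G`; a vertex `u` and an incidence `(w, f)` are adjacent when `u ∈ f`; two
distinct incidences `(v, e)`, `(w, f)` are adjacent when `v = w`, or `e = f`, or
`{v, w} = e`, or `{v, w} = f`. -/
def VIAdj (G : SimpleGraph V) : VIElem G → VIElem G → Prop
  | Sum.inl u, Sum.inl w => G.Adj u w
  | Sum.inl u, Sum.inr i => u ∈ i.1.2
  | Sum.inr i, Sum.inl u => u ∈ i.1.2
  | Sum.inr i, Sum.inr j => i ≠ j ∧
      (i.1.1 = j.1.1 ∨ i.1.2 = j.1.2 ∨ s(i.1.1, j.1.1) = i.1.2 ∨ s(i.1.1, j.1.1) = j.1.2)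

/-- A vi-simultaneous proper `k`-coloring of `G`: adjacent or incident elements of
`V(G) ∪ I(G)` receive distinct colors. -/
def IsVIColoring (G : SimpleGraph V) {k : ℕ} (c : VIElem G → Fin k) : Prop :=
  ∀ a b, VIAdj G a b → c a ≠ c b

/-- The vi-simultaneous chromatic number `χ_vi(G)`: the least `k` admitting a
vi-simultaneous proper `k`-coloring. -/
noncomputable def chiVI (G : SimpleGraph V) : ℕ :=
  sInf {k | ∃ c : VIElem G → Fin k, IsVIColoring G c}

/-- `I₂(v)`: the set of second incidences of a vertex `v`, i.e. incidences `(u, e)` with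
`e = {u, v}` and `u ≠ v`. -/
def I2 (G : SimpleGraph V) (v : V) : Set (Inc G) :=
  {i | i.1.1 ≠ v ∧ i.1.2 = s(i.1.1, v)}

/-- A vi-simultaneous `(k, s)`-coloring: a vi-simultaneous proper `k`-coloring in which at
most `s` distinct colors appear on `I₂(v)` for every vertex `v`. -/
def IsVISColoring (G : SimpleGraph V) (s : ℕ) {k : ℕ} (c : VIElem G → Fin k) : Prop :=
  IsVIColoring G c ∧ ∀ v : V, ((fun i => c (Sum.inr i)) '' I2 G v).ncard ≤ s

/-- `χ_{vi,s}(G)`: the least `k` admitting a vi-simultaneous `(k, s)`-coloring. -/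
noncomputable def chiVIS (G : SimpleGraph V) (s : ℕ) : ℕ :=
  sInf {k | ∃ c : VIElem G → Fin k, IsVISColoring G s c}

/-- The maximum degree `Δ(G)` of a finite graph. -/
noncomputable def maxDeg [Fintype V] (G : SimpleGraph V) : ℕ :=
  Finset.univ.sup fun v => (G.neighborSet v).ncard

/-- A graph is `k`-degenerate if every (nonempty, induced) subgraph has a vertex of degree
at most `k`; the degree of `v` in the subgraph induced on `s ∋ v` is `|N_G(v) ∩ s|`. -/
def Degenerate (k : ℕ) (G : SimpleGraph V) : Prop :=
  ∀ s : Set V, s.Nonempty → ∃ v ∈ s, (G.neighborSet v ∩ s).ncard ≤ k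

/-!
Colour the vertices one at a time along a degeneracy order, keeping a vi-simultaneous colouring
of the induced subgraph with at most three colours on every `I₂(u)`. A new vertex `v` has at most
three earlier neighbours `u`. The incidences `(v, vu)` and `(u, uv)` must avoid the colour of `u`
and the colours of the at most `Δ - 1` incidences `(u, uw)` already present, which leaves at
least five colours. The colour of `(v, vu)` joins `I₂(u)`, so it is taken among (a padding to
three of) the colours already there, while `(u, uv)` must avoid them; doing this for the three
neighbours simultaneously is a small system-of-distinct-representatives problem. Finally `v`
avoids at most nine colours.
-/

open Finset

section Representatives

variable {ι α : Type*} [DecidableEq α]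

lemma exists_injOn_mem_of_card_le [DecidableEq ι] [Nonempty α] {T : Finset ι}
    {A : ι → Finset α} (h : ∀ u ∈ T, #T ≤ #(A u)) :
    ∃ f : ι → α, Set.InjOn f T ∧ ∀ u ∈ T, f u ∈ A u := by
  induction T using Finset.induction_on with
  | empty => exact ⟨fun _ => Classical.arbitrary α, by simp, by simp⟩
  | insert a T ha ih =>
    obtain ⟨f, hinj, hmem⟩ := ih fun u hu =>
      (card_le_card (subset_insert a T)).trans (h u (mem_insert_of_mem hu))
    have hcard : #(T.image f) < #(A a) := by
      have := h a (mem_insert_self a T)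
      rw [card_insert_of_notMem ha] at this
      exact card_image_le.trans_lt this
    obtain ⟨x, hxA, hxf⟩ := exists_mem_notMem_of_card_lt_card hcard
    have hfT : ∀ u ∈ T, Function.update f a x u = f u := fun u hu =>
      Function.update_of_ne (ne_of_mem_of_not_mem hu ha) _ _
    refine ⟨Function.update f a x, ?_, ?_⟩
    · rw [coe_insert, Set.injOn_insert (mod_cast ha)]
      refine ⟨(hinj.congr fun u hu => (hfT u hu).symm), ?_⟩
      rintro ⟨u, hu, hux⟩
      rw [hfT u hu, Function.update_self] at hux
      exact hxf (hux ▸ mem_image_of_mem f (mem_coe.mp hu))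
    · intro u hu
      rcases mem_insert.mp hu with rfl | hu
      · simpa using hxA
      · simpa [hfT u hu] using hmem u hu

lemma not_subset_image_of_card_lt [DecidableEq ι] {T R : Finset ι} {f : ι → α} {g : Finset α}
    (hRT : R ⊆ T) (hR : ∀ w ∈ R, f w ∉ g) (hT : #T < #R + #g) :
    ¬ g ⊆ T.image f := by
  intro hsub
  have : g ⊆ (T \ R).image f := by
    intro y hy
    obtain ⟨w, hw, rfl⟩ := mem_image.mp (hsub hy)
    exact mem_image_of_mem f (mem_sdiff.mpr ⟨hw, fun hwR => hR w hwR hy⟩)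
  have := (card_le_card this).trans card_image_le
  rw [card_sdiff_of_subset hRT] at this
  have := card_le_card hRT
  omega

lemma exists_ne_three_of_card_lt [Fintype α] {T : Finset ι} (a b d : ι → α)
    (h : 3 * #T < Fintype.card α) : ∃ c, ∀ u ∈ T, c ≠ a u ∧ c ≠ b u ∧ c ≠ d u := by
  have hcard : #(T.image a ∪ T.image b ∪ T.image d) < #(univ : Finset α) := by
    have := card_union_le (T.image a ∪ T.image b) (T.image d)
    have := card_union_le (T.image a) (T.image b)
    have := card_image_le (s := T) (f := a)
    have := card_image_le (s := T) (f := b)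
    have := card_image_le (s := T) (f := d)
    rw [card_univ]
    omega
  obtain ⟨c, -, hc⟩ := exists_mem_notMem_of_card_lt_card hcard
  refine ⟨c, fun u hu => ?_⟩
  simp only [mem_union, mem_image, not_or, not_exists, not_and] at hc
  exact ⟨fun e => hc.1.1 u hu e.symm, fun e => hc.1.2 u hu e.symm, fun e => hc.2 u hu e.symm⟩

end Representatives

section Triples

variable {α : Type*}

def ExistsAvoidingTriple (A₁ A₂ A₃ g₁ g₂ g₃ : Finset α) : Prop :=
  ∃ x₁ ∈ A₁, ∃ x₂ ∈ A₂, ∃ x₃ ∈ A₃, x₁ ≠ x₂ ∧ x₁ ≠ x₃ ∧ x₂ ≠ x₃ ∧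
    (x₂ ∉ g₁ ∨ x₃ ∉ g₁) ∧ (x₁ ∉ g₂ ∨ x₃ ∉ g₂) ∧ (x₁ ∉ g₃ ∨ x₂ ∉ g₃)

variable {A₁ A₂ A₃ g₁ g₂ g₃ : Finset α}

lemma ExistsAvoidingTriple.swap₁₂ (h : ExistsAvoidingTriple A₂ A₁ A₃ g₂ g₁ g₃) :
    ExistsAvoidingTriple A₁ A₂ A₃ g₁ g₂ g₃ := by
  obtain ⟨x₂, h₂, x₁, h₁, x₃, h₃, h₂₁, h₂₃, h₁₃, c₂, c₁, c₃⟩ := h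
  exact ⟨x₁, h₁, x₂, h₂, x₃, h₃, h₂₁.symm, h₁₃, h₂₃, c₁, c₂, c₃.symm⟩

lemma ExistsAvoidingTriple.swap₁₃ (h : ExistsAvoidingTriple A₃ A₂ A₁ g₃ g₂ g₁) :
    ExistsAvoidingTriple A₁ A₂ A₃ g₁ g₂ g₃ := by
  obtain ⟨x₃, h₃, x₂, h₂, x₁, h₁, h₃₂, h₃₁, h₂₁, c₃, c₂, c₁⟩ := h
  exact ⟨x₁, h₁, x₂, h₂, x₃, h₃, h₂₁.symm, h₃₁.symm, h₃₂.symm, c₁.symm, c₂.symm, c₃.symm⟩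

lemma ExistsAvoidingTriple.swap₂₃ (h : ExistsAvoidingTriple A₁ A₃ A₂ g₁ g₃ g₂) :
    ExistsAvoidingTriple A₁ A₂ A₃ g₁ g₂ g₃ := by
  obtain ⟨x₁, h₁, x₃, h₃, x₂, h₂, h₁₃, h₁₂, h₃₂, c₁, c₃, c₂⟩ := h
  exact ⟨x₁, h₁, x₂, h₂, x₃, h₃, h₁₂, h₁₃, h₃₂.symm, c₁.symm, c₂, c₃⟩

variable [DecidableEq α]

lemma existsAvoidingTriple_of_harmless_of_mem (hA₃ : #A₃ = 3)
    {h x₂ : α} (hh : h ∈ A₁) (hh₂ : h ∉ g₂) (hh₃ : h ∉ g₃)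
    (hx₂ : x₂ ∈ A₂) (hx₂h : x₂ ≠ h) (hx₂g : x₂ ∉ g₁) :
    ExistsAvoidingTriple A₁ A₂ A₃ g₁ g₂ g₃ := by
  obtain ⟨x₃, hx₃, hx₃h⟩ : ∃ x₃ ∈ A₃, x₃ ∉ ({h, x₂} : Finset α) :=
    exists_mem_notMem_of_card_lt_card ((card_le_two).trans_lt (by omega))
  simp only [mem_insert, mem_singleton, not_or] at hx₃h
  exact ⟨h, hh, x₂, hx₂, x₃, hx₃, Ne.symm hx₂h, Ne.symm hx₃h.1, Ne.symm hx₃h.2,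
    .inl hx₂g, .inl hh₂, .inl hh₃⟩

/-- A harmless colour `h ∈ A₁`, outside `g₂ ∪ g₃`, taken as `x₁` settles the constraints of
indices 2 and 3 at once. -/
lemma existsAvoidingTriple_of_harmless (hA₁ : #A₁ = 3) (hA₂ : #A₂ = 3) (hA₃ : #A₃ = 3)
    (hg₁ : #g₁ = 2) (hA₁g₁ : Disjoint A₁ g₁) (hA₂g₂ : Disjoint A₂ g₂)
    {h : α} (hh : h ∈ A₁) (hh₂ : h ∉ g₂) (hh₃ : h ∉ g₃) :
    ExistsAvoidingTriple A₁ A₂ A₃ g₁ g₂ g₃ := by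
  by_cases h₂ : A₂ ⊆ insert h g₁
  · by_cases h₃ : A₃ ⊆ insert h g₁
    · -- both `A₂` and `A₃` lie in the 3-set `{h} ∪ g₁`, so `A₂ = {h} ∪ g₁`
      have hA₂eq : A₂ = insert h g₁ := eq_of_subset_of_card_le h₂ (by
        rw [hA₂]; exact (card_insert_le _ _).trans (by omega))
      obtain ⟨x₃, hx₃, hx₃h⟩ : ∃ x₃ ∈ A₃, x₃ ∉ ({h} : Finset α) :=
        exists_mem_notMem_of_card_lt_card (by simp [hA₃])
      rw [mem_singleton] at hx₃h
      have hx₃g₁ : x₃ ∈ g₁ := by simpa [hx₃h] using h₃ hx₃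
      obtain ⟨x₁, hx₁, hx₁h⟩ : ∃ x₁ ∈ A₁, x₁ ∉ ({h} : Finset α) :=
        exists_mem_notMem_of_card_lt_card (by simp [hA₁])
      rw [mem_singleton] at hx₁h
      have hx₃A₂ : x₃ ∈ A₂ := hA₂eq ▸ mem_insert_of_mem hx₃g₁
      refine ⟨x₁, hx₁, h, hA₂eq ▸ mem_insert_self h g₁, x₃, hx₃, hx₁h,
        fun e => disjoint_left.mp hA₁g₁ hx₁ (e ▸ hx₃g₁), Ne.symm hx₃h,
        .inl (disjoint_left.mp hA₁g₁ hh), .inr (disjoint_left.mp hA₂g₂ hx₃A₂), .inr hh₃⟩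
    · obtain ⟨x₃, hx₃, hx₃'⟩ := not_subset.mp h₃
      simp only [mem_insert, not_or] at hx₃'
      exact (existsAvoidingTriple_of_harmless_of_mem hA₂ hh hh₃ hh₂ hx₃ hx₃'.1 hx₃'.2).swap₂₃
  · obtain ⟨x₂, hx₂, hx₂'⟩ := not_subset.mp h₂
    simp only [mem_insert, not_or] at hx₂'
    exact existsAvoidingTriple_of_harmless_of_mem hA₃ hh hh₂ hh₃ hx₂ hx₂'.1 hx₂'.2

/-- The cyclic choice `x₁ ∉ g₂`, `x₂ ∉ g₃`, `x₃ ∉ g₁` meets all three constraints; here it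
also forces `x₁ ∈ g₃`, `x₂ ∈ g₁`, `x₃ ∈ g₂`, which makes it injective. -/
lemma existsAvoidingTriple_of_subset_union (hA₁ : #A₁ = 3) (hA₂ : #A₂ = 3) (hA₃ : #A₃ = 3)
    (hg₁ : #g₁ = 2) (hg₂ : #g₂ = 2) (hg₃ : #g₃ = 2)
    (h₁ : A₁ ⊆ g₂ ∪ g₃) (h₂ : A₂ ⊆ g₃ ∪ g₁) (h₃ : A₃ ⊆ g₁ ∪ g₂) :
    ExistsAvoidingTriple A₁ A₂ A₃ g₁ g₂ g₃ := by
  obtain ⟨x₁, hx₁, hx₁g₂⟩ := exists_mem_notMem_of_card_lt_card (by omega : #g₂ < #A₁)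
  obtain ⟨x₂, hx₂, hx₂g₃⟩ := exists_mem_notMem_of_card_lt_card (by omega : #g₃ < #A₂)
  obtain ⟨x₃, hx₃, hx₃g₁⟩ := exists_mem_notMem_of_card_lt_card (by omega : #g₁ < #A₃)
  have hx₁g₃ : x₁ ∈ g₃ := by simpa [hx₁g₂] using h₁ hx₁
  have hx₂g₁ : x₂ ∈ g₁ := by simpa [hx₂g₃] using h₂ hx₂
  have hx₃g₂ : x₃ ∈ g₂ := by simpa [hx₃g₁] using h₃ hx₃
  exact ⟨x₁, hx₁, x₂, hx₂, x₃, hx₃, fun e => hx₂g₃ (e ▸ hx₁g₃), fun e => hx₁g₂ (e ▸ hx₃g₂),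
    fun e => hx₃g₁ (e ▸ hx₂g₁), .inr hx₃g₁, .inl hx₁g₂, .inr hx₂g₃⟩

lemma existsAvoidingTriple (hA₁ : #A₁ = 3) (hA₂ : #A₂ = 3) (hA₃ : #A₃ = 3)
    (hg₁ : #g₁ = 2) (hg₂ : #g₂ = 2) (hg₃ : #g₃ = 2)
    (hA₁g₁ : Disjoint A₁ g₁) (hA₂g₂ : Disjoint A₂ g₂) (hA₃g₃ : Disjoint A₃ g₃) :
    ExistsAvoidingTriple A₁ A₂ A₃ g₁ g₂ g₃ := by
  by_cases h₁ : A₁ ⊆ g₂ ∪ g₃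
  · by_cases h₂ : A₂ ⊆ g₃ ∪ g₁
    · by_cases h₃ : A₃ ⊆ g₁ ∪ g₂
      · exact existsAvoidingTriple_of_subset_union hA₁ hA₂ hA₃ hg₁ hg₂ hg₃ h₁ h₂ h₃
      · obtain ⟨h, hh, hh'⟩ := not_subset.mp h₃
        simp only [mem_union, not_or] at hh'
        exact (existsAvoidingTriple_of_harmless hA₃ hA₂ hA₁ hg₃ hA₃g₃ hA₂g₂ hh hh'.2
          hh'.1).swap₁₃
    · obtain ⟨h, hh, hh'⟩ := not_subset.mp h₂
      simp only [mem_union, not_or] at hh'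
      exact (existsAvoidingTriple_of_harmless hA₂ hA₁ hA₃ hg₂ hA₂g₂ hA₁g₁ hh hh'.2
        hh'.1).swap₁₂
  · obtain ⟨h, hh, hh'⟩ := not_subset.mp h₁
    simp only [mem_union, not_or] at hh'
    exact existsAvoidingTriple_of_harmless hA₁ hA₂ hA₃ hg₁ hA₁g₁ hA₂g₂ hh hh'.1 hh'.2

end Triples

section Representatives

variable {ι α : Type*} [DecidableEq ι] [DecidableEq α]

lemma exists_injOn_mem_not_subset_image_of_card_eq_three {T : Finset ι} (hT : #T = 3)
    {A g : ι → Finset α} (hA : ∀ u ∈ T, #(A u) = 3) (hg : ∀ u ∈ T, #(g u) = 2)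
    (hAg : ∀ u ∈ T, Disjoint (A u) (g u)) :
    ∃ f : ι → α, Set.InjOn f T ∧ ∀ u ∈ T, f u ∈ A u ∧ ¬ g u ⊆ T.image f := by
  obtain ⟨a, b, c, hab, hac, hbc, rfl⟩ := card_eq_three.mp hT
  have hg' := hg
  simp only [mem_insert, mem_singleton, forall_eq_or_imp, forall_eq] at hA hg hAg
  obtain ⟨x₁, hx₁, x₂, hx₂, x₃, hx₃, h₁₂, h₁₃, h₂₃, c₁, c₂, c₃⟩ :=
    existsAvoidingTriple hA.1 hA.2.1 hA.2.2 hg.1 hg.2.1 hg.2.2 hAg.1 hAg.2.1 hAg.2.2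
  set f : ι → α := fun u => if u = a then x₁ else if u = b then x₂ else x₃
  have hfa : f a = x₁ := if_pos rfl
  have hfb : f b = x₂ := by simp [f, hab.symm]
  have hfc : f c = x₃ := by simp [f, hac.symm, hbc.symm]
  have hout : ∀ u ∈ ({a, b, c} : Finset ι), ∀ w ∈ ({a, b, c} : Finset ι), u ≠ w →
      f u ∉ g u → f w ∉ g u → ¬ g u ⊆ ({a, b, c} : Finset ι).image f := by
    intro u hu w hw huw hfu hfw
    refine not_subset_image_of_card_lt (R := {u, w}) ?_ (by simp [hfu, hfw]) ?_
    · exact insert_subset hu (singleton_subset_iff.mpr hw)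
    · rw [card_pair huw, hg' u hu, card_eq_three.mpr ⟨a, b, c, hab, hac, hbc, rfl⟩]; omega
  refine ⟨f, ?_, ?_⟩
  · intro u hu w hw
    simp only [coe_insert, coe_singleton, Set.mem_insert_iff, Set.mem_singleton_iff] at hu hw
    rcases hu with rfl | rfl | rfl <;> rcases hw with rfl | rfl | rfl <;>
      intro h <;> first
        | rfl
        | (simp only [hfa, hfb, hfc] at h; first | exact absurd h ‹_› | exact absurd h.symm ‹_›)
  · simp only [mem_insert, mem_singleton, forall_eq_or_imp, forall_eq]
    refine ⟨⟨hfa ▸ hx₁, ?_⟩, ⟨hfb ▸ hx₂, ?_⟩, ⟨hfc ▸ hx₃, ?_⟩⟩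
    · have h₁ := disjoint_left.mp hAg.1 hx₁
      rcases c₁ with c₁ | c₁
      · exact hout a (by simp) b (by simp) hab (hfa ▸ h₁) (hfb ▸ c₁)
      · exact hout a (by simp) c (by simp) hac (hfa ▸ h₁) (hfc ▸ c₁)
    · have h₂ := disjoint_left.mp hAg.2.1 hx₂
      rcases c₂ with c₂ | c₂
      · exact hout b (by simp) a (by simp) hab.symm (hfb ▸ h₂) (hfa ▸ c₂)
      · exact hout b (by simp) c (by simp) hbc (hfb ▸ h₂) (hfc ▸ c₂)
    · have h₃ := disjoint_left.mp hAg.2.2 hx₃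
      rcases c₃ with c₃ | c₃
      · exact hout c (by simp) a (by simp) hac.symm (hfc ▸ h₃) (hfa ▸ c₃)
      · exact hout c (by simp) b (by simp) hbc.symm (hfc ▸ h₃) (hfb ▸ c₃)

lemma exists_injOn_mem_not_subset_image [Nonempty α] {T : Finset ι} (hT : #T ≤ 3)
    {A g : ι → Finset α} (hA : ∀ u ∈ T, #(A u) = 3) (hg : ∀ u ∈ T, #(g u) = 2)
    (hAg : ∀ u ∈ T, Disjoint (A u) (g u)) :
    ∃ f : ι → α, Set.InjOn f T ∧ ∀ u ∈ T, f u ∈ A u ∧ ¬ g u ⊆ T.image f := by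
  rcases hT.lt_or_eq with hT | hT
  · obtain ⟨f, hinj, hmem⟩ := exists_injOn_mem_of_card_le fun u hu => (hA u hu).symm ▸ hT.le
    refine ⟨f, hinj, fun u hu => ⟨hmem u hu, ?_⟩⟩
    refine not_subset_image_of_card_lt (singleton_subset_iff.mpr hu) ?_ (by simp [hg u hu]; omega)
    simpa using disjoint_left.mp (hAg u hu) (hmem u hu)
  · exact exists_injOn_mem_not_subset_image_of_card_eq_three hT hA hg hAg

/-- For a new vertex `v` with earlier neighbours `T`: `avail u` holds the colours still free at `u`
and `A u` the colours on `I₂(u)`; `f u` and `s u` become the colours of `(v, vu)` and `(u, uv)`. -/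
lemma exists_choice_functions [Nonempty α] {T : Finset ι} (hT : #T ≤ 3)
    {avail A : ι → Finset α} (h5 : ∀ u ∈ T, 5 ≤ #(avail u)) (hA : ∀ u ∈ T, #(A u) ≤ 3)
    (hAavail : ∀ u ∈ T, A u ⊆ avail u) :
    ∃ f s : ι → α, Set.InjOn f T ∧ ∀ u ∈ T, f u ∈ avail u ∧ #(insert (f u) (A u)) ≤ 3 ∧
      s u ∈ avail u \ A u ∧ s u ∉ T.image f := by
  have hpad : ∀ u ∈ T, ∃ B g : Finset α,
      A u ⊆ B ∧ B ⊆ avail u ∧ #B = 3 ∧ g ⊆ avail u \ B ∧ #g = 2 := by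
    intro u hu
    obtain ⟨B, hAB, hB, hBcard⟩ :=
      exists_subsuperset_card_eq (hAavail u hu) (hA u hu) (by have := h5 u hu; omega)
    obtain ⟨g, hg, hgcard⟩ := exists_subset_card_eq (s := avail u \ B) (n := 2)
      (by rw [card_sdiff_of_subset hB]; have := h5 u hu; omega)
    exact ⟨B, g, hAB, hB, hBcard, hg, hgcard⟩
  choose! B g hAB hB hBcard hg hgcard using hpad
  obtain ⟨f, hinj, hf⟩ := exists_injOn_mem_not_subset_image hT hBcard hgcard
    fun u hu => disjoint_left.mpr fun x hx hxg => (mem_sdiff.mp (hg u hu hxg)).2 hx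
  choose! s hs hsf using fun u hu => not_subset.mp (hf u hu).2
  refine ⟨f, s, hinj, fun u hu => ⟨hB u hu (hf u hu).1, ?_, ?_, hsf u hu⟩⟩
  · exact (card_le_card (insert_subset (hf u hu).1 (hAB u hu))).trans (hBcard u hu).le
  · exact sdiff_subset_sdiff subset_rfl (hAB u hu) (hg u hu (hs u hu))

end Representatives

namespace Inc

variable {G : SimpleGraph V}

noncomputable def other (i : Inc G) : V := Sym2.Mem.other i.2.2

lemma edge_eq (i : Inc G) : i.1.2 = s(i.1.1, i.other) := (Sym2.other_spec i.2.2).symm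

lemma adj (i : Inc G) : G.Adj i.1.1 i.other := by
  simpa [edge_eq i] using i.2.1

lemma ext_of_other {i j : Inc G} (h₁ : i.1.1 = j.1.1) (h₂ : i.other = j.other) : i = j :=
  Subtype.ext (Prod.ext h₁ (by rw [edge_eq i, edge_eq j, h₁, h₂]))

lemma mem_edge_iff {i : Inc G} {u : V} : u ∈ i.1.2 ↔ u = i.1.1 ∨ u = i.other := by
  rw [edge_eq i, Sym2.mem_iff]

end Inc

section Incidences

variable {G : SimpleGraph V}

lemma viAdj_inr_inr_iff {i j : Inc G} :
    VIAdj G (.inr i) (.inr j) ↔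
      i ≠ j ∧ (i.1.1 = j.1.1 ∨ i.other = j.1.1 ∨ i.1.1 = j.other) := by
  have hi := i.adj.ne
  have hj := j.adj.ne
  simp only [VIAdj, Inc.edge_eq i, Inc.edge_eq j, Sym2.eq_iff]
  grind

lemma mem_I2_iff {i : Inc G} {v : V} : i ∈ I2 G v ↔ i.other = v := by
  have hi := i.adj.ne
  simp only [I2, Set.mem_ofPred_eq, Inc.edge_eq i, Sym2.eq_iff]
  grind

end Incidences

section PartialColoring

variable {β : Type*}

/-- `ci u w` is the colour of the incidence `(u, uw)`; only the part induced on `S` is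
constrained, and the second incidences of each `u ∈ S` coming from `S` must fit in a palette of
`r` colours. -/
structure IsPartialVISColoring (G : SimpleGraph V) (r : ℕ) (S : Finset V) (cv : V → β)
    (ci : V → V → β) : Prop where
  vertex : ∀ ⦃u w⦄, u ∈ S → w ∈ S → G.Adj u w → cv u ≠ cv w
  inc_self : ∀ ⦃u w⦄, u ∈ S → w ∈ S → G.Adj u w → ci u w ≠ cv u
  inc_other : ∀ ⦃u w⦄, u ∈ S → w ∈ S → G.Adj u w → ci u w ≠ cv w
  inc_inc_same : ∀ ⦃u w w'⦄, u ∈ S → w ∈ S → w' ∈ S → G.Adj u w → G.Adj u w' → w ≠ w' →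
    ci u w ≠ ci u w'
  inc_inc_consec : ∀ ⦃u w x⦄, u ∈ S → w ∈ S → x ∈ S → G.Adj u w → G.Adj w x →
    ci u w ≠ ci w x
  palette : ∀ u ∈ S, ∃ P : Finset β, #P ≤ r ∧ ∀ w ∈ S, G.Adj w u → ci w u ∈ P

variable {G : SimpleGraph V}

lemma isPartialVISColoring_empty (r : ℕ) (cv : V → β) (ci : V → V → β) :
    IsPartialVISColoring G r ∅ cv ci where
  vertex := by simp
  inc_self := by simp
  inc_other := by simp
  inc_inc_same := by simp
  inc_inc_consec := by simp
  palette := by simp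

noncomputable def pairColoring (cv : V → β) (ci : V → V → β) : VIElem G → β
  | .inl u => cv u
  | .inr i => ci i.1.1 i.other

lemma IsPartialVISColoring.isVISColoring [Fintype V] {r k : ℕ} {cv : V → Fin k}
    {ci : V → V → Fin k} (h : IsPartialVISColoring G r univ cv ci) :
    IsVISColoring G r (pairColoring cv ci) := by
  refine ⟨?_, fun v => ?_⟩
  · rintro (u | i) (w | j) hadj
    · exact h.vertex (mem_univ u) (mem_univ w) hadj
    · rcases Inc.mem_edge_iff.mp hadj with rfl | rfl
      · exact (h.inc_self (mem_univ _) (mem_univ _) j.adj).symm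
      · exact (h.inc_other (mem_univ _) (mem_univ _) j.adj).symm
    · rcases Inc.mem_edge_iff.mp hadj with rfl | rfl
      · exact h.inc_self (mem_univ _) (mem_univ _) i.adj
      · exact h.inc_other (mem_univ _) (mem_univ _) i.adj
    · show ci i.1.1 i.other ≠ ci j.1.1 j.other
      obtain ⟨hij, h₁ | h₂ | h₃⟩ := viAdj_inr_inr_iff.mp hadj
      · rw [← h₁]
        refine h.inc_inc_same (mem_univ _) (mem_univ _) (mem_univ _) i.adj (h₁ ▸ j.adj) ?_
        exact fun ho => hij (Inc.ext_of_other h₁ ho)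
      · rw [← h₂]
        exact h.inc_inc_consec (mem_univ _) (mem_univ _) (mem_univ _) i.adj (h₂ ▸ j.adj)
      · rw [h₃]
        exact (h.inc_inc_consec (mem_univ _) (mem_univ _) (mem_univ _) j.adj
          (h₃ ▸ i.adj)).symm
  · obtain ⟨P, hP, hPv⟩ := h.palette v (mem_univ v)
    calc ((fun i => pairColoring cv ci (.inr i)) '' I2 G v).ncard
        ≤ (P : Set (Fin k)).ncard := by
          refine Set.ncard_le_ncard ?_ P.finite_toSet
          rintro _ ⟨i, hi, rfl⟩
          obtain rfl := mem_I2_iff.mp hi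
          exact hPv _ (mem_univ _) i.adj
      _ ≤ r := by rwa [Set.ncard_coe_finset]

end PartialColoring

section ExtendInc

variable {β : Type*} [DecidableEq V]

/-- The incidence colouring after adding a vertex `v`: `f w` colours `(v, vw)` and `s u`
colours `(u, uv)`. -/
def extendInc (ci : V → V → β) (v : V) (f s : V → β) : V → V → β :=
  fun u w => if u = v then f w else if w = v then s u else ci u w

variable {ci : V → V → β} {v : V} {f s : V → β}

lemma extendInc_self_left (w : V) : extendInc ci v f s v w = f w := if_pos rfl

lemma extendInc_self_right {u : V} (hu : u ≠ v) : extendInc ci v f s u v = s u := by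
  simp [extendInc, hu]

lemma extendInc_of_ne {u w : V} (hu : u ≠ v) (hw : w ≠ v) : extendInc ci v f s u w = ci u w := by
  simp [extendInc, hu, hw]

end ExtendInc

section Blocked

variable {β : Type*} [DecidableEq β] (G : SimpleGraph V) [DecidableRel G.Adj]

def blocked (S : Finset V) (cv : V → β) (ci : V → V → β) (u : V) : Finset β :=
  insert (cv u) ((S.filter (G.Adj u)).image (ci u))

/-- `f u` colours `(v, vu)` and `s u` colours `(u, uv)` for the neighbours `u ∈ S` of `v`, and
`c` colours `v`. -/
structure IsAdmissibleExtension (r : ℕ) (S : Finset V) (cv : V → β) (ci : V → V → β) (v : V)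
    (f s : V → β) (c : β) : Prop where
  notMem : v ∉ S
  card_le : #(S.filter (G.Adj v)) ≤ r
  out_notMem_blocked : ∀ u ∈ S, G.Adj v u → f u ∉ blocked G S cv ci u
  in_notMem_blocked : ∀ u ∈ S, G.Adj v u → s u ∉ blocked G S cv ci u
  in_ne_second : ∀ u ∈ S, G.Adj v u → ∀ w ∈ S, G.Adj w u → s u ≠ ci w u
  injOn_out : Set.InjOn f (S.filter (G.Adj v))
  in_ne_out : ∀ u ∈ S, G.Adj v u → ∀ w ∈ S, G.Adj v w → s u ≠ f w
  palette : ∀ u ∈ S, G.Adj v u →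
    ∃ P : Finset β, #P ≤ r ∧ f u ∈ P ∧ ∀ w ∈ S, G.Adj w u → ci w u ∈ P
  vertex_ne : ∀ u ∈ S, G.Adj v u → c ≠ cv u ∧ c ≠ f u ∧ c ≠ s u

variable {G} {r : ℕ} {S : Finset V} {cv : V → β} {ci : V → V → β} {v : V} {f s : V → β} {c : β}

lemma IsAdmissibleExtension.ne_of_mem (he : IsAdmissibleExtension G r S cv ci v f s c) {x : V}
    (hx : x ∈ S) : x ≠ v :=
  fun e => he.notMem (e ▸ hx)

lemma notMem_blocked_iff {u : V} {x : β} :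
    x ∉ blocked G S cv ci u ↔ x ≠ cv u ∧ ∀ w ∈ S, G.Adj u w → x ≠ ci u w := by
  simp [blocked, eq_comm]

lemma IsPartialVISColoring.notMem_blocked (h : IsPartialVISColoring G r S cv ci)
    {u w : V} (hw : w ∈ S) (hu : u ∈ S) (hwu : G.Adj w u) : ci w u ∉ blocked G S cv ci u :=
  notMem_blocked_iff.mpr
    ⟨h.inc_other hw hu hwu, fun _ hx hux => h.inc_inc_consec hw hu hx hwu hux⟩

lemma card_blocked_le_maxDeg [Fintype V] [DecidableEq V] {u : V} (hv : v ∉ S)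
    (huv : G.Adj u v) : #(blocked G S cv ci u) ≤ maxDeg G := by
  have hsub : (↑(insert v (S.filter (G.Adj u))) : Set V) ⊆ G.neighborSet u := by
    intro x hx
    simp only [coe_insert, coe_filter, Set.mem_insert_iff, Set.mem_ofPred_eq] at hx
    rcases hx with rfl | hx
    exacts [huv, hx.2]
  calc #(blocked G S cv ci u)
      ≤ #(S.filter (G.Adj u)) + 1 := (card_insert_le _ _).trans (by gcongr; exact card_image_le)
    _ = #(insert v (S.filter (G.Adj u))) := (card_insert_of_notMem (by simp [hv])).symm
    _ ≤ (G.neighborSet u).ncard := by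
      rw [← Set.ncard_coe_finset]; exact Set.ncard_le_ncard hsub (Set.toFinite _)
    _ ≤ maxDeg G := le_sup (f := fun v => (G.neighborSet v).ncard) (mem_univ u)

end Blocked

section Extension

variable {β : Type*} [DecidableEq V] [DecidableEq β] {G : SimpleGraph V} [DecidableRel G.Adj]
  {r : ℕ} {S : Finset V} {cv : V → β} {ci : V → V → β} {v : V} {f s : V → β} {c : β}

open Function

namespace IsPartialVISColoring

lemma extend_vertex (h : IsPartialVISColoring G r S cv ci)
    (he : IsAdmissibleExtension G r S cv ci v f s c) ⦃u w : V⦄ (hu : u ∈ insert v S)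
    (hw : w ∈ insert v S) (huw : G.Adj u w) :
    update cv v c u ≠ update cv v c w := by
  rw [mem_insert] at hu hw
  rcases hu with rfl | hu <;> rcases hw with rfl | hw
  · exact (G.irrefl huw).elim
  · rw [update_self, update_of_ne (he.ne_of_mem hw)]
    exact (he.vertex_ne w hw huw).1
  · rw [update_self, update_of_ne (he.ne_of_mem hu)]
    exact (he.vertex_ne u hu huw.symm).1.symm
  · rw [update_of_ne (he.ne_of_mem hu), update_of_ne (he.ne_of_mem hw)]
    exact h.vertex hu hw huw

lemma extend_inc_self (h : IsPartialVISColoring G r S cv ci)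
    (he : IsAdmissibleExtension G r S cv ci v f s c) ⦃u w : V⦄ (hu : u ∈ insert v S)
    (hw : w ∈ insert v S) (huw : G.Adj u w) : extendInc ci v f s u w ≠ update cv v c u := by
  rw [mem_insert] at hu hw
  rcases hu with rfl | hu <;> rcases hw with rfl | hw
  · exact (G.irrefl huw).elim
  · rw [update_self, extendInc_self_left]
    exact (he.vertex_ne w hw huw).2.1.symm
  · rw [update_of_ne (he.ne_of_mem hu), extendInc_self_right (he.ne_of_mem hu)]
    exact (notMem_blocked_iff.mp (he.in_notMem_blocked u hu huw.symm)).1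
  · rw [update_of_ne (he.ne_of_mem hu), extendInc_of_ne (he.ne_of_mem hu) (he.ne_of_mem hw)]
    exact h.inc_self hu hw huw

lemma extend_inc_other (h : IsPartialVISColoring G r S cv ci)
    (he : IsAdmissibleExtension G r S cv ci v f s c) ⦃u w : V⦄ (hu : u ∈ insert v S)
    (hw : w ∈ insert v S) (huw : G.Adj u w) : extendInc ci v f s u w ≠ update cv v c w := by
  rw [mem_insert] at hu hw
  rcases hu with rfl | hu <;> rcases hw with rfl | hw
  · exact (G.irrefl huw).elim
  · rw [update_of_ne (he.ne_of_mem hw), extendInc_self_left]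
    exact (notMem_blocked_iff.mp (he.out_notMem_blocked w hw huw)).1
  · rw [update_self, extendInc_self_right (he.ne_of_mem hu)]
    exact (he.vertex_ne u hu huw.symm).2.2.symm
  · rw [update_of_ne (he.ne_of_mem hw), extendInc_of_ne (he.ne_of_mem hu) (he.ne_of_mem hw)]
    exact h.inc_other hu hw huw

lemma extend_inc_inc_same (h : IsPartialVISColoring G r S cv ci)
    (he : IsAdmissibleExtension G r S cv ci v f s c) ⦃u w w' : V⦄ (hu : u ∈ insert v S)
    (hw : w ∈ insert v S) (hw' : w' ∈ insert v S) (huw : G.Adj u w) (huw' : G.Adj u w')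
    (hww' : w ≠ w') :
    extendInc ci v f s u w ≠ extendInc ci v f s u w' := by
  rw [mem_insert] at hu hw hw'
  rcases hu with rfl | hu
  · replace hw := hw.resolve_left huw.ne'
    replace hw' := hw'.resolve_left huw'.ne'
    rw [extendInc_self_left, extendInc_self_left]
    exact fun e => hww' (he.injOn_out (by simp [hw, huw]) (by simp [hw', huw']) e)
  have hu' := he.ne_of_mem hu
  rcases hw with rfl | hw <;> rcases hw' with rfl | hw'
  · exact absurd rfl hww'
  · rw [extendInc_self_right hu', extendInc_of_ne hu' (he.ne_of_mem hw')]
    exact (notMem_blocked_iff.mp (he.in_notMem_blocked u hu huw.symm)).2 w' hw' huw'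
  · rw [extendInc_self_right hu', extendInc_of_ne hu' (he.ne_of_mem hw)]
    exact ((notMem_blocked_iff.mp (he.in_notMem_blocked u hu huw'.symm)).2 w hw huw).symm
  · rw [extendInc_of_ne hu' (he.ne_of_mem hw), extendInc_of_ne hu' (he.ne_of_mem hw')]
    exact h.inc_inc_same hu hw hw' huw huw' hww'

lemma extend_inc_inc_consec (h : IsPartialVISColoring G r S cv ci)
    (he : IsAdmissibleExtension G r S cv ci v f s c) ⦃u w x : V⦄ (hu : u ∈ insert v S)
    (hw : w ∈ insert v S) (hx : x ∈ insert v S) (huw : G.Adj u w) (hwx : G.Adj w x) :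
    extendInc ci v f s u w ≠ extendInc ci v f s w x := by
  rw [mem_insert] at hu hw hx
  rcases hu with rfl | hu
  · replace hw := hw.resolve_left huw.ne'
    rw [extendInc_self_left]
    rcases hx with rfl | hx
    · rw [extendInc_self_right (he.ne_of_mem hw)]
      exact (he.in_ne_out w hw huw w hw huw).symm
    · rw [extendInc_of_ne (he.ne_of_mem hw) (he.ne_of_mem hx)]
      exact (notMem_blocked_iff.mp (he.out_notMem_blocked w hw huw)).2 x hx hwx
  rcases hw with rfl | hw
  · replace hx := hx.resolve_left hwx.ne'
    rw [extendInc_self_right (he.ne_of_mem hu), extendInc_self_left]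
    exact he.in_ne_out u hu huw.symm x hx hwx
  rw [extendInc_of_ne (he.ne_of_mem hu) (he.ne_of_mem hw)]
  rcases hx with rfl | hx
  · rw [extendInc_self_right (he.ne_of_mem hw)]
    exact (he.in_ne_second w hw hwx.symm u hu huw).symm
  · rw [extendInc_of_ne (he.ne_of_mem hw) (he.ne_of_mem hx)]
    exact h.inc_inc_consec hu hw hx huw hwx

lemma extend_palette (h : IsPartialVISColoring G r S cv ci)
    (he : IsAdmissibleExtension G r S cv ci v f s c) (u : V) (hu : u ∈ insert v S) :
    ∃ P : Finset β, #P ≤ r ∧ ∀ w ∈ insert v S, G.Adj w u → extendInc ci v f s w u ∈ P := by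
  rw [mem_insert] at hu
  rcases hu with rfl | hu
  · refine ⟨(S.filter (G.Adj u)).image s, card_image_le.trans he.card_le, fun w hw hwu => ?_⟩
    replace hw := (mem_insert.mp hw).resolve_left hwu.ne
    rw [extendInc_self_right (he.ne_of_mem hw)]
    exact mem_image_of_mem s (mem_filter.mpr ⟨hw, hwu.symm⟩)
  by_cases hvu : G.Adj v u
  · obtain ⟨P, hP, hfP, hciP⟩ := he.palette u hu hvu
    refine ⟨P, hP, fun w hw hwu => ?_⟩
    rcases mem_insert.mp hw with rfl | hw
    · rwa [extendInc_self_left]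
    · rw [extendInc_of_ne (he.ne_of_mem hw) (he.ne_of_mem hu)]
      exact hciP w hw hwu
  · obtain ⟨P, hP, hciP⟩ := h.palette u hu
    refine ⟨P, hP, fun w hw hwu => ?_⟩
    rcases mem_insert.mp hw with rfl | hw
    · exact absurd hwu hvu
    · rw [extendInc_of_ne (he.ne_of_mem hw) (he.ne_of_mem hu)]
      exact hciP w hw hwu

theorem extend (h : IsPartialVISColoring G r S cv ci)
    (he : IsAdmissibleExtension G r S cv ci v f s c) :
    IsPartialVISColoring G r (insert v S) (update cv v c) (extendInc ci v f s) :=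
  ⟨h.extend_vertex he, h.extend_inc_self he, h.extend_inc_other he, h.extend_inc_inc_same he,
    h.extend_inc_inc_consec he, h.extend_palette he⟩

end IsPartialVISColoring

end Extension

section Induction

variable {β : Type*} [Fintype V] [DecidableEq V] [Fintype β] [DecidableEq β]
  {G : SimpleGraph V} [DecidableRel G.Adj] {S : Finset V} {cv : V → β} {ci : V → V → β}

theorem IsPartialVISColoring.exists_extend (hβ : maxDeg G + 5 ≤ Fintype.card β)
    (hβ₁₀ : 10 ≤ Fintype.card β) (h : IsPartialVISColoring G 3 S cv ci) {v : V} (hv : v ∉ S)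
    (hT : #(S.filter (G.Adj v)) ≤ 3) :
    ∃ (cv' : V → β) (ci' : V → V → β), IsPartialVISColoring G 3 (insert v S) cv' ci' := by
  have hT_mem : ∀ {u}, u ∈ S.filter (G.Adj v) ↔ u ∈ S ∧ G.Adj v u := mem_filter
  choose! P hP hPci using h.palette
  set avail : V → Finset β := fun u => univ \ blocked G S cv ci u
  have h5 : ∀ u ∈ S.filter (G.Adj v), 5 ≤ #(avail u) := by
    intro u hu
    have := card_blocked_le_maxDeg (cv := cv) (ci := ci) hv (hT_mem.mp hu).2.symm
    rw [card_sdiff_of_subset (subset_univ _), card_univ]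
    omega
  have : Nonempty β := Fintype.card_pos_iff.mp (by omega)
  obtain ⟨f, s, hinj, hfs⟩ := exists_choice_functions hT h5 (A := fun u => P u ∩ avail u)
    (fun u hu => (card_le_card inter_subset_left).trans (hP u (hT_mem.mp hu).1))
    (fun _ _ => inter_subset_right)
  replace hfs : ∀ u ∈ S, G.Adj v u → _ := fun u hu hvu => hfs u (hT_mem.mpr ⟨hu, hvu⟩)
  obtain ⟨c, hc⟩ := exists_ne_three_of_card_lt (T := S.filter (G.Adj v)) cv f s (by omega)
  have hci_mem : ∀ u ∈ S, ∀ w ∈ S, G.Adj w u → ci w u ∈ P u ∩ avail u := fun u hu w hw hwu =>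
    mem_inter.mpr ⟨hPci u hu w hw hwu, mem_sdiff.mpr ⟨mem_univ _, h.notMem_blocked hw hu hwu⟩⟩
  refine ⟨_, _, h.extend ⟨hv, hT, ?_, ?_, ?_, hinj, ?_, ?_,
    fun u hu hvu => hc u (hT_mem.mpr ⟨hu, hvu⟩)⟩⟩
  · exact fun u hu hvu => (mem_sdiff.mp (hfs u hu hvu).1).2
  · exact fun u hu hvu => (mem_sdiff.mp (mem_sdiff.mp (hfs u hu hvu).2.2.1).1).2
  · intro u hu hvu w hw hwu e
    exact (mem_sdiff.mp (hfs u hu hvu).2.2.1).2 (e ▸ hci_mem u hu w hw hwu)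
  · intro u hu hvu w hw hvw e
    exact (hfs u hu hvu).2.2.2 (e ▸ mem_image_of_mem f (hT_mem.mpr ⟨hw, hvw⟩))
  · intro u hu hvu
    exact ⟨_, (hfs u hu hvu).2.1, mem_insert_self _ _,
      fun w hw hwu => mem_insert_of_mem (hci_mem u hu w hw hwu)⟩

theorem exists_isPartialVISColoring (hdeg : Degenerate 3 G) (hβ : maxDeg G + 5 ≤ Fintype.card β)
    (hβ₁₀ : 10 ≤ Fintype.card β) (S : Finset V) :
    ∃ (cv : V → β) (ci : V → V → β), IsPartialVISColoring G 3 S cv ci := by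
  have : Nonempty β := Fintype.card_pos_iff.mp (by omega)
  induction S using Finset.strongInduction with
  | H S ih =>
    rcases S.eq_empty_or_nonempty with rfl | hS
    · exact ⟨fun _ => Classical.arbitrary β, fun _ _ => Classical.arbitrary β,
        isPartialVISColoring_empty _ _ _⟩
    obtain ⟨v, hvS, hv⟩ := hdeg S (coe_nonempty.mpr hS)
    obtain ⟨cv, ci, h⟩ := ih (S.erase v) (erase_ssubset hvS)
    have hT : #((S.erase v).filter (G.Adj v)) ≤ 3 := by
      refine le_trans ?_ hv
      rw [← Set.ncard_coe_finset]
      refine Set.ncard_le_ncard (fun x hx => ?_) (Set.toFinite _)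
      simp only [coe_filter, mem_erase, Set.mem_ofPred_eq] at hx
      exact ⟨hx.2, hx.1.2⟩
    rw [← insert_erase hvS]
    exact h.exists_extend hβ hβ₁₀ (notMem_erase v S) hT

end Induction

/-- Every 3-degenerate finite simple graph `G` with maximum degree
`Δ(G) ≥ 5` admits a vi-simultaneous `(Δ(G)+5, 3)`-coloring; consequently
`χ_{vi,3}(G) ≤ Δ(G) + 5`. -/
theorem chiVIS_three_degenerate {V : Type*} [Fintype V] [DecidableEq V]
    (G : SimpleGraph V) (hdeg : Degenerate 3 G) (hΔ : 5 ≤ maxDeg G) :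
    (∃ c : VIElem G → Fin (maxDeg G + 5), IsVISColoring G 3 c) ∧
    chiVIS G 3 ≤ maxDeg G + 5 := by
  classical
  obtain ⟨cv, ci, h⟩ := exists_isPartialVISColoring (β := Fin (maxDeg G + 5)) hdeg
    (by simp) (by simp; omega) univ
  exact ⟨⟨_, h.isVISColoring⟩, Nat.sInf_le ⟨_, h.isVISColoring⟩⟩
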